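/- arXiv:2307.05958 — 2 statements merged into one kernel-verified Lean document; each statement's English description precedes it below -/
import Mathlib

section
/- Let ℓ be an odd prime, let p be a prime, and let q = p^f, where f is the multiplicative order of p modulo ℓ and f is even. Let χ be a multiplicative character of F_q of exact order ℓ. Then for all (k₁,k₂) with k₁, k₂, k₁+k₂ ≢ 0 mod ℓ, the Jacobi sum J_{(k₁,k₂)} = -∑_{λ∈F_q} χ(λ)^{k₁}χ(1-λ)^{k₂} equals -√q. -/
open Finset Polynomial

private lemma jacFrob {F : Type*} [Field F] [Fintype F] {p : ℕ} [hp : Fact p.Prime] [CharP F p]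
    (χ₁ χ₂ : MulChar F ℂ) : jacobiSum (χ₁ ^ p) (χ₂ ^ p) = jacobiSum χ₁ χ₂ := by
  have hp0 : p ≠ 0 := hp.out.ne_zero
  have hbij : Function.Bijective (frobenius F p) :=
    Finite.injective_iff_bijective.mp (frobenius_inj F p)
  calc jacobiSum (χ₁ ^ p) (χ₂ ^ p)
      = ∑ x : F, χ₁ (x ^ p) * χ₂ ((1 - x) ^ p) := by
        refine Finset.sum_congr rfl fun x _ ↦ ?_
        rw [MulChar.pow_apply' _ hp0, MulChar.pow_apply' _ hp0, map_pow, map_pow]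
    _ = ∑ x : F, χ₁ (x ^ p) * χ₂ (1 - x ^ p) := by
        refine Finset.sum_congr rfl fun x _ ↦ ?_
        rw [sub_pow_char, one_pow]
    _ = ∑ x : F, χ₁ x * χ₂ (1 - x) :=
        Fintype.sum_bijective _ hbij _ _ fun x ↦ rfl
    _ = jacobiSum χ₁ χ₂ := rfl

private lemma jacFrobPow {F : Type*} [Field F] [Fintype F] {p : ℕ} [Fact p.Prime] [CharP F p]
    (χ₁ χ₂ : MulChar F ℂ) (j : ℕ) :
    jacobiSum (χ₁ ^ p ^ j) (χ₂ ^ p ^ j) = jacobiSum χ₁ χ₂ := by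
  induction j with
  | zero => simp
  | succ n ih =>
    rw [pow_succ, pow_mul, pow_mul, jacFrob, ih]

/-- Gross–Rohrlich lemma: let p ≠ ℓ be primes with the multiplicative order f
of p modulo ℓ even, and q = p^f. For a multiplicative character χ of F_q of
exact order ℓ and k₁, k₂, k₁+k₂ ≢ 0 (mod ℓ), the Jacobi sum
J_{(k₁,k₂)} = -∑_{λ} χ(λ)^{k₁} χ(1-λ)^{k₂} equals -√q. -/
theorem jacobi_sum_eq_neg_sqrt_q_of_even_order
    (ℓ p : ℕ) (hℓ : ℓ.Prime) (hℓodd : Odd ℓ) (hp : p.Prime) (hne : p ≠ ℓ)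
    (f : ℕ) (hf : f = orderOf (p : ZMod ℓ)) (hfeven : Even f)
    (F : Type*) [Field F] [Fintype F] (hcard : Fintype.card F = p ^ f)
    (χ : MulChar F ℂ) (hχ : orderOf χ = ℓ)
    (k₁ k₂ : ℕ) (h₁ : ¬ ℓ ∣ k₁) (h₂ : ¬ ℓ ∣ k₂) (h₁₂ : ¬ ℓ ∣ (k₁ + k₂)) :
    (-∑ lam : F, χ lam ^ k₁ * χ (1 - lam) ^ k₂)
      = -((Real.sqrt (Fintype.card F) : ℝ) : ℂ) := by
  classical
  have hℓpos : 0 < ℓ := hℓ.pos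
  have hℓ2 : ℓ ≠ 2 := by rintro rfl; exact (Nat.not_odd_iff_even.mpr even_two) hℓodd
  have hℓ3 : 2 < ℓ := lt_of_le_of_ne hℓ.two_le (Ne.symm hℓ2)
  haveI : Fact p.Prime := ⟨hp⟩
  haveI : Fact ℓ.Prime := ⟨hℓ⟩
  have hpne0 : (p : ZMod ℓ) ≠ 0 := by
    rw [Ne, ZMod.natCast_eq_zero_iff]
    intro h
    exact hne ((Nat.prime_dvd_prime_iff_eq hℓ hp).mp h).symm
  have hfpos : 0 < f := by
    rw [hf]
    refine orderOf_pos_iff.mpr ?_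
    refine isOfFinOrder_iff_pow_eq_one.mpr ⟨ℓ - 1, by omega, ?_⟩
    exact ZMod.pow_card_sub_one_eq_one hpne0
  -- CharP F p
  haveI hcharF : CharP F p := by
    obtain ⟨n, hr, hc⟩ := FiniteField.card F (ringChar F)
    have hdvd : ringChar F ∣ p ^ f := hcard ▸ hc ▸ dvd_pow_self _ n.2.ne'
    have : ringChar F = p := (Nat.prime_dvd_prime_iff_eq hr hp).mp (hr.dvd_of_dvd_pow hdvd)
    exact this ▸ ringChar.charP F
  -- half exponent
  obtain ⟨t, ht⟩ := hfeven
  have htf : f = 2 * t := by omega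
  have htpos : 0 < t := by omega
  -- p^t ≡ -1 mod ℓ
  have hsq : (p : ZMod ℓ) ^ t * (p : ZMod ℓ) ^ t = 1 := by
    rw [← pow_add, ← two_mul, ← htf, hf, pow_orderOf_eq_one]
  have hne1 : (p : ZMod ℓ) ^ t ≠ 1 := by
    intro h
    have hd := orderOf_dvd_of_pow_eq_one h
    rw [← hf] at hd
    have := Nat.le_of_dvd htpos hd
    omega
  have hneg : (p : ZMod ℓ) ^ t = -1 := by
    rcases mul_self_eq_one_iff.mp hsq with h | h
    · exact absurd h hne1
    · exact h
  -- ℓ ∣ p^t + 1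
  have hdvd1 : ℓ ∣ p ^ t + 1 := by
    have : ((p ^ t + 1 : ℕ) : ZMod ℓ) = 0 := by
      push_cast
      rw [hneg]; ring
    exact (ZMod.natCast_eq_zero_iff _ _).mp this
  -- characters
  set χ₁ := χ ^ k₁ with hχ₁
  set χ₂ := χ ^ k₂ with hχ₂
  have hpow_ne_one : ∀ k : ℕ, ¬ ℓ ∣ k → χ ^ k ≠ 1 := by
    intro k hk h
    exact hk (hχ ▸ orderOf_dvd_of_pow_eq_one h)
  have hχ₁1 : χ₁ ≠ 1 := hpow_ne_one k₁ h₁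
  have hχ₂1 : χ₂ ≠ 1 := hpow_ne_one k₂ h₂
  have hχ₁₂1 : χ₁ * χ₂ ≠ 1 := by
    have h : χ₁ * χ₂ = χ ^ (k₁ + k₂) := by rw [pow_add]
    rw [h]; exact hpow_ne_one _ h₁₂
  -- the sum is the Jacobi sum
  have hk₁0 : k₁ ≠ 0 := by rintro rfl; exact h₁ (dvd_zero ℓ)
  have hk₂0 : k₂ ≠ 0 := by rintro rfl; exact h₂ (dvd_zero ℓ)
  have hsum : (∑ lam : F, χ lam ^ k₁ * χ (1 - lam) ^ k₂) = jacobiSum χ₁ χ₂ := by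
    refine (Finset.sum_congr rfl fun x _ ↦ ?_).symm
    rw [hχ₁, hχ₂, MulChar.pow_apply' _ hk₁0, MulChar.pow_apply' _ hk₂0]
  set J := jacobiSum χ₁ χ₂ with hJ
  have e1 : (starRingEnd ℂ) J = jacobiSum χ₁⁻¹ χ₂⁻¹ := by
    rw [hJ, jacobiSum, jacobiSum, map_sum]
    refine Finset.sum_congr rfl fun x _ ↦ ?_
    rw [map_mul]
    exact congrArg₂ _ (χ₁.star_apply' x) (χ₂.star_apply' (1 - x))
  have hχℓ : ∀ k : ℕ, (χ ^ k) ^ ℓ = 1 := by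
    intro k
    rw [← pow_mul, mul_comm, pow_mul, ← hχ, pow_orderOf_eq_one, one_pow]
  -- conjugate of J is J
  have hconj : (starRingEnd ℂ) J = J := by
    have hinv : ∀ ψ : MulChar F ℂ, ψ ^ ℓ = 1 → ψ ^ p ^ t = ψ⁻¹ := by
      intro ψ hψ
      refine eq_inv_of_mul_eq_one_left ?_
      obtain ⟨c, hc⟩ := hdvd1
      rw [← pow_succ, hc, pow_mul, hψ, one_pow]
    rw [e1, ← hinv χ₁ (hχℓ k₁), ← hinv χ₂ (hχℓ k₂), jacFrobPow, hJ]
  -- |J|^2 = q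
  have hmodsq : J * (starRingEnd ℂ) J = (Fintype.card F : ℂ) := by
    have hr : ringChar ℂ ≠ ringChar F := by
      have h0 : ringChar ℂ = 0 := ringChar.eq_zero
      have hFp : ringChar F = p := ringChar.eq F p
      rw [h0, hFp]
      exact hp.pos.ne
    rw [e1, hJ]
    exact jacobiSum_mul_jacobiSum_inv hr hχ₁1 hχ₂1 hχ₁₂1
  -- J is real
  obtain ⟨r, hr⟩ : ∃ r : ℝ, J = (r : ℂ) := ⟨J.re, (Complex.conj_eq_iff_re.mp hconj).symm⟩
  have hr2 : (r : ℂ) ^ 2 = (Fintype.card F : ℂ) := by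
    rw [← hr, sq]
    nth_rewrite 2 [← hconj]
    exact hmodsq
  -- sqrt q = p ^ t
  have hsqrt : Real.sqrt (Fintype.card F) = (p : ℝ) ^ t := by
    rw [hcard, htf]
    push_cast
    rw [mul_comm, pow_mul]
    exact Real.sqrt_sq (by positivity)
  -- r = ± p^t
  have habs : r = (p:ℝ)^t ∨ r = -((p:ℝ)^t) := by
    have h1 : r ^ 2 = ((p:ℝ)^t) ^ 2 := by
      have : r ^ 2 = (Fintype.card F : ℝ) := by exact_mod_cast hr2
      rw [this, hcard, htf]
      push_cast
      rw [mul_comm, pow_mul]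
    exact sq_eq_sq_iff_eq_or_eq_neg.mp h1
  -- exclude the negative sign via congruence mod (μ - 1)^2
  have hfin : r = (p:ℝ)^t := by
    rcases habs with h | h
    · exact h
    exfalso
    set μ : ℂ := Complex.exp (2 * Real.pi * Complex.I / ℓ) with hμdef
    have hμ : IsPrimitiveRoot μ ℓ := Complex.isPrimitiveRoot_exp ℓ hℓpos.ne'
    have hcardmod : ℓ ∣ Fintype.card F - 1 := by
      have hpf : ((p : ZMod ℓ)) ^ f = 1 := by rw [hf, pow_orderOf_eq_one]
      have hple : 1 ≤ p ^ f := Nat.one_le_pow _ _ hp.pos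
      have hcast : ((p ^ f - 1 : ℕ) : ZMod ℓ) = 0 := by
        push_cast [Nat.cast_sub hple]
        rw [hpf]; ring
      rw [hcard]
      exact (ZMod.natCast_eq_zero_iff _ _).mp hcast
    obtain ⟨z, hz, hzeq⟩ :=
      exists_jacobiSum_eq_neg_one_add hℓ3 (hχℓ k₁) (hχℓ k₂) hcardmod hμ
    rw [Algebra.adjoin_singleton_eq_range_aeval] at hz
    obtain ⟨P, hP0⟩ := hz
    have hP : (Polynomial.aeval μ) P = z := hP0
    rw [← hχ₁, ← hχ₂, ← hJ] at hzeq
    obtain ⟨m, hm⟩ := hdvd1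
    have hJval : J = -((p:ℂ)^t) := by
      rw [hr, h]
      push_cast
      ring
    set Q : Polynomial ℤ := P * (X - 1) ^ 2 - C (2 - (ℓ : ℤ) * m) with hQ
    have hQμ : Polynomial.aeval μ Q = 0 := by
      have hzz : z * (μ - 1) ^ 2 = J + 1 := by rw [hzeq]; ring
      have hc : ((p : ℂ) ^ t : ℂ) = (ℓ : ℂ) * m - 1 := by
        have hcast : ((p : ℂ)) ^ t + 1 = (ℓ : ℂ) * m := by exact_mod_cast congrArg (Nat.cast : ℕ → ℂ) hm
        linear_combination hcast
      have h2 : (Polynomial.aeval μ) P * (μ - 1) ^ 2 = (2 : ℂ) - (ℓ : ℂ) * m := by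
        rw [hP, hzz, hJval, hc]
        ring
      rw [hQ]
      simp only [map_sub, map_mul, map_pow, Polynomial.aeval_X, Polynomial.aeval_one,
        Polynomial.aeval_C, eq_intCast, map_intCast, map_natCast, map_ofNat]
      rw [h2]
      ring
    have hint : IsIntegral ℤ μ := hμ.isIntegral hℓpos
    have hmin : minpoly ℤ μ = Polynomial.cyclotomic ℓ ℤ :=
      (Polynomial.cyclotomic_eq_minpoly hμ hℓpos).symm
    have hdvdQ : Polynomial.cyclotomic ℓ ℤ ∣ Q := hmin ▸ minpoly.isIntegrallyClosed_dvd hint hQμ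
    have hℓdvd : (ℓ : ℤ) ∣ Q.eval 1 := by
      obtain ⟨R, hR⟩ := hdvdQ
      rw [hR, Polynomial.eval_mul, Polynomial.eval_one_cyclotomic_prime]
      exact Dvd.intro _ rfl
    have heval : Q.eval 1 = (ℓ : ℤ) * m - 2 := by
      rw [hQ]
      simp
    rw [heval] at hℓdvd
    have h2dvd : (ℓ : ℤ) ∣ 2 := by
      have hd := dvd_sub (dvd_mul_right (ℓ : ℤ) (m : ℤ)) hℓdvd
      simpa using hd
    have : (ℓ : ℕ) ∣ 2 := by exact_mod_cast h2dvd
    have := Nat.le_of_dvd (by norm_num) this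
    omega
  -- conclude
  rw [hsum, hr, hfin, hsqrt]
end

section
/- Let ℓ be an odd prime and p a prime with p ≡ -1 (mod ℓ), and let 𝔭 be a prime of F = ℚ(μ_ℓ) above p, so q_𝔭 = p². Then for every (k₁,k₂) ∈ I_ℓ, the Jacobi sum J_{(k₁,k₂)}(𝔭) (formed with the ℓ-th power residue character χ_𝔭 of F_𝔭 ≅ F_{p²}) equals -p; hence ∑_{(k₁,k₂)∈I_ℓ} J_{(k₁,k₂)}(𝔭)/q_𝔭^{1/2} = -(ℓ-1)(ℓ-2). -/
open Polynomial Finset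

private lemma jacobiSum_eq_p
    (ℓ p : ℕ) (hℓ : ℓ.Prime) (hℓodd : Odd ℓ) (hp : p.Prime)
    (hmod : p % ℓ = ℓ - 1)
    (F : Type*) [Field F] [Fintype F] (hcard : Fintype.card F = p ^ 2)
    (φ ψ : MulChar F ℂ) (hφℓ : φ ^ ℓ = 1) (hψℓ : ψ ^ ℓ = 1)
    (hφ : φ ≠ 1) (hψ : ψ ≠ 1) (hφψ : φ * ψ ≠ 1) :
    jacobiSum φ ψ = (p : ℂ) := by
  have hℓ3 : 2 < ℓ := by
    rcases hℓ.two_le.lt_or_eq with h | h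
    · exact h
    · exact absurd hℓodd (by simp [← h])
  have hℓ0 : ℓ ≠ 0 := by omega
  -- char of F is p
  have hrchar : ringChar F = p := by
    obtain ⟨n, hp', hc⟩ := FiniteField.card F (ringChar F)
    rw [hcard] at hc
    have : p ∣ ringChar F ^ (n : ℕ) := hc ▸ dvd_pow_self p two_ne_zero
    exact ((Nat.prime_dvd_prime_iff_eq hp hp').mp (hp.dvd_of_dvd_pow this)).symm
  haveI hcharP : CharP F p := by rw [← hrchar]; exact ringChar.charP F
  haveI : ExpChar F p := ExpChar.prime hp
  -- p ≡ -1 mod ℓ facts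
  have hdm := Nat.div_add_mod p ℓ
  have hpm : p + 1 = ℓ * (p / ℓ + 1) := by rw [Nat.mul_add, Nat.mul_one]; omega
  obtain ⟨m, hm⟩ : ℓ ∣ p + 1 := ⟨p / ℓ + 1, hpm⟩
  clear hpm hdm
  have hpm : p + 1 = ℓ * (p / ℓ + 1) := by
    have hdm := Nat.div_add_mod p ℓ
    rw [Nat.mul_add, Nat.mul_one]; omega
  haveI : Fact p.Prime := ⟨hp⟩
  -- key: χ⁻¹ x = χ (x ^ p) for characters of order dividing ℓ
  have hkey : ∀ (θ : MulChar F ℂ), θ ^ ℓ = 1 → ∀ x : F, θ⁻¹ x = θ (x ^ p) := by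
    intro θ hθ x
    rcases eq_or_ne x 0 with rfl | hx
    · rw [zero_pow hp.ne_zero, MulChar.map_zero, MulChar.map_zero]
    · have hroot : θ x ^ ℓ = 1 := by
        rw [← MulChar.pow_apply' θ hℓ0, hθ, MulChar.one_apply (Ne.isUnit hx)]
      have h1 : θ (x ^ p) = θ x ^ p := map_pow θ x p
      have h2 : θ x ^ p = (θ x)⁻¹ := by
        have h3 : θ x ^ p * θ x = 1 := by
          rw [← pow_succ, hpm, pow_mul, hroot, one_pow]
        exact eq_inv_of_mul_eq_one_left h3
      rw [MulChar.inv_apply_eq_inv', h1, h2]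
  -- J(φ⁻¹, ψ⁻¹) = J(φ, ψ)
  have hbij : Function.Bijective (fun x : F => x ^ p) := by
    refine Finite.injective_iff_bijective.mp (fun a b hab => ?_)
    exact frobenius_inj F p (by simpa [frobenius_def] using hab)
  have hJJ : jacobiSum φ⁻¹ ψ⁻¹ = jacobiSum φ ψ := by
    unfold jacobiSum
    calc ∑ x : F, φ⁻¹ x * ψ⁻¹ (1 - x)
        = ∑ x : F, φ (x ^ p) * ψ (1 - x ^ p) := by
          refine Finset.sum_congr rfl fun x _ => ?_
          rw [hkey φ hφℓ, hkey ψ hψℓ, sub_pow_expChar, one_pow]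
      _ = ∑ x : F, φ x * ψ (1 - x) :=
          Fintype.sum_bijective _ hbij _ _ (fun x => rfl)
  -- hence J² = p²
  have hchar : ringChar ℂ ≠ ringChar F := by
    rw [hrchar, ringChar.eq_zero]
    exact fun h => hp.ne_zero h.symm
  have hsq : jacobiSum φ ψ * jacobiSum φ ψ = ((p : ℂ)) ^ 2 := by
    have := jacobiSum_mul_jacobiSum_inv hchar hφ hψ hφψ
    rw [hJJ, hcard] at this
    push_cast at this
    exact this
  have hJpm : jacobiSum φ ψ = (p : ℂ) ∨ jacobiSum φ ψ = -(p : ℂ) := by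
    have : (jacobiSum φ ψ - p) * (jacobiSum φ ψ + p) = 0 := by ring_nf; linear_combination hsq
    rcases mul_eq_zero.mp this with h | h
    · exact Or.inl (by linear_combination h)
    · exact Or.inr (by linear_combination h)
  rcases hJpm with h | h
  · exact h
  -- rule out J = -p
  exfalso
  set μ := Complex.exp (2 * Real.pi * Complex.I / ℓ) with hμdef
  have hμ : IsPrimitiveRoot μ ℓ := Complex.isPrimitiveRoot_exp ℓ hℓ0
  have hdvd : ℓ ∣ Fintype.card F - 1 := by
    rw [hcard]
    refine ⟨m * (p - 1), ?_⟩
    have h2p : 2 ≤ p := hp.two_le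
    zify [show 1 ≤ p ^ 2 from Nat.one_le_pow _ _ (by omega), show 1 ≤ p by omega]
    have hmz : (p : ℤ) + 1 = (ℓ : ℤ) * (m : ℤ) := by exact_mod_cast hm
    linear_combination (p - 1 : ℤ) * hmz
  obtain ⟨z, hz, hJz⟩ := exists_jacobiSum_eq_neg_one_add hℓ3 hφℓ hψℓ hdvd hμ
  obtain ⟨z₁, hz₁, Hz₁⟩ := hμ.self_sub_one_pow_dvd_order hℓ3
  -- 2 = (z + m z₁) (μ - 1)²
  have hw : (2 : ℂ) = (z + (m : ℂ) * z₁) * (μ - 1) ^ 2 := by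
    have hpc : (p : ℂ) + 1 = (ℓ : ℂ) * (m : ℂ) := by exact_mod_cast hm
    rw [h] at hJz
    linear_combination hJz + (m : ℂ) * Hz₁ + hpc
  have hwmem : z + ((m : ℕ) : ℂ) * z₁ ∈ Algebra.adjoin ℤ {μ} :=
    Subalgebra.add_mem _ hz (Subalgebra.mul_mem _ (Subalgebra.natCast_mem _ _) hz₁)
  rw [Algebra.adjoin_singleton_eq_range_aeval] at hwmem
  obtain ⟨g, hg⟩ := hwmem
  -- μ is a root of (X-1)² g - 2
  have haev : aeval μ ((X - 1) ^ 2 * g - C 2) = 0 := by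
    have hg' : aeval μ g = z + ((m : ℕ) : ℂ) * z₁ := hg
    have h2c : (algebraMap ℤ ℂ) 2 = 2 := by norm_num
    simp only [map_sub, map_mul, map_pow, aeval_X, aeval_one, aeval_C, map_one]
    rw [hg', h2c]
    linear_combination -hw
  have hmin : minpoly ℤ μ ∣ (X - 1) ^ 2 * g - C 2 :=
    minpoly.isIntegrallyClosed_dvd (hμ.isIntegral (by omega)) haev
  rw [← Polynomial.cyclotomic_eq_minpoly hμ (by omega)] at hmin
  haveI : Fact ℓ.Prime := ⟨hℓ⟩
  have heval : (Polynomial.cyclotomic ℓ ℤ).eval 1 ∣ ((X - 1) ^ 2 * g - C 2).eval 1 :=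
    Polynomial.eval_dvd hmin
  rw [Polynomial.eval_one_cyclotomic_prime] at heval
  simp only [Polynomial.eval_sub, Polynomial.eval_mul, Polynomial.eval_pow, Polynomial.eval_sub,
    Polynomial.eval_X, Polynomial.eval_one, Polynomial.eval_C, sub_self] at heval
  have : (ℓ : ℤ) ∣ 2 := by
    have : (ℓ : ℤ) ∣ (-2 : ℤ) := by simpa using heval
    simpa using this.neg_right
  have := Int.le_of_dvd (by norm_num) this
  omega
/-- Let ℓ be an odd prime and p a prime with p ≡ -1 (mod ℓ), and let the
residue field at a prime 𝔭 of ℚ(μ_ℓ) above p be F_𝔭 ≅ F_{p²}.  For a character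
χ of F_𝔭^* of exact order ℓ (such as the ℓ-th power residue symbol), every
Jacobi sum J_{(k₁,k₂)} with (k₁,k₂) ∈ I_ℓ equals -p, and hence
∑_{(k₁,k₂)∈I_ℓ} J_{(k₁,k₂)}/√q_𝔭 = -(ℓ-1)(ℓ-2). -/
theorem jacobi_sums_at_neg_one_mod
    (ℓ p : ℕ) (hℓ : ℓ.Prime) (hℓodd : Odd ℓ) (hp : p.Prime)
    (hmod : p % ℓ = ℓ - 1)
    (F : Type*) [Field F] [Fintype F] (hcard : Fintype.card F = p ^ 2)
    (χ : MulChar F ℂ) (hχ : orderOf χ = ℓ) :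
    (∀ k₁ k₂ : ℕ, ¬ ℓ ∣ k₁ → ¬ ℓ ∣ k₂ → ¬ ℓ ∣ (k₁ + k₂) →
      (-∑ lam : F, χ lam ^ k₁ * χ (1 - lam) ^ k₂) = -(p : ℂ)) ∧
    (∑ k₁ ∈ Finset.Icc 1 (ℓ - 1), ∑ k₂ ∈ Finset.Icc 1 (ℓ - 1),
        if ¬ ℓ ∣ (k₁ + k₂) then
          (-∑ lam : F, χ lam ^ k₁ * χ (1 - lam) ^ k₂) / (p : ℂ)
        else 0)
      = -(((ℓ - 1) * (ℓ - 2) : ℕ) : ℂ) := by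
  have hℓ3 : 2 < ℓ := by
    rcases hℓ.two_le.lt_or_eq with h | h
    · exact h
    · exact absurd hℓodd (by simp [← h])
  have hχℓ : χ ^ ℓ = 1 := by rw [← hχ]; exact pow_orderOf_eq_one χ
  have H1 : ∀ k₁ k₂ : ℕ, ¬ ℓ ∣ k₁ → ¬ ℓ ∣ k₂ → ¬ ℓ ∣ (k₁ + k₂) →
      (-∑ lam : F, χ lam ^ k₁ * χ (1 - lam) ^ k₂) = -(p : ℂ) := by
    intro k₁ k₂ h1 h2 h12
    have hk₁0 : k₁ ≠ 0 := fun h => h1 (h ▸ dvd_zero ℓ)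
    have hk₂0 : k₂ ≠ 0 := fun h => h2 (h ▸ dvd_zero ℓ)
    have hφ : χ ^ k₁ ≠ 1 := fun h => h1 (hχ ▸ orderOf_dvd_of_pow_eq_one h)
    have hψ : χ ^ k₂ ≠ 1 := fun h => h2 (hχ ▸ orderOf_dvd_of_pow_eq_one h)
    have hφψ : χ ^ k₁ * χ ^ k₂ ≠ 1 := by
      rw [← pow_add]
      exact fun h => h12 (hχ ▸ orderOf_dvd_of_pow_eq_one h)
    have hφℓ : (χ ^ k₁) ^ ℓ = 1 := by rw [← pow_mul, mul_comm, pow_mul, hχℓ, one_pow]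
    have hψℓ : (χ ^ k₂) ^ ℓ = 1 := by rw [← pow_mul, mul_comm, pow_mul, hχℓ, one_pow]
    have key := jacobiSum_eq_p ℓ p hℓ hℓodd hp hmod F hcard (χ ^ k₁) (χ ^ k₂)
      hφℓ hψℓ hφ hψ hφψ
    have hsum : (∑ lam : F, χ lam ^ k₁ * χ (1 - lam) ^ k₂) = jacobiSum (χ ^ k₁) (χ ^ k₂) := by
      unfold jacobiSum
      exact Finset.sum_congr rfl fun x _ => by
        rw [MulChar.pow_apply' χ hk₁0, MulChar.pow_apply' χ hk₂0]
    rw [hsum, key]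
  refine ⟨H1, ?_⟩
  have hpne : (p : ℂ) ≠ 0 := Nat.cast_ne_zero.mpr hp.ne_zero
  have step1 : ∀ k₁ ∈ Finset.Icc 1 (ℓ - 1),
      (∑ k₂ ∈ Finset.Icc 1 (ℓ - 1),
        if ¬ ℓ ∣ (k₁ + k₂) then
          (-∑ lam : F, χ lam ^ k₁ * χ (1 - lam) ^ k₂) / (p : ℂ)
        else 0)
      = ∑ k₂ ∈ Finset.Icc 1 (ℓ - 1), ((if ℓ ∣ (k₁ + k₂) then (1 : ℂ) else 0) - 1) := by
    intro k₁ hk₁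
    rw [Finset.mem_Icc] at hk₁
    refine Finset.sum_congr rfl fun k₂ hk₂ => ?_
    rw [Finset.mem_Icc] at hk₂
    by_cases hd : ℓ ∣ (k₁ + k₂)
    · simp [hd]
    · have hnd1 : ¬ ℓ ∣ k₁ := fun h => by
        have := Nat.eq_zero_of_dvd_of_lt h (by omega); omega
      have hnd2 : ¬ ℓ ∣ k₂ := fun h => by
        have := Nat.eq_zero_of_dvd_of_lt h (by omega); omega
      rw [if_pos hd, if_neg hd, H1 k₁ k₂ hnd1 hnd2 hd]
      rw [neg_div, div_self hpne]
      ring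
  have hfilter : ∀ k₁ ∈ Finset.Icc 1 (ℓ - 1),
      (Finset.Icc 1 (ℓ - 1)).filter (fun k₂ => ℓ ∣ (k₁ + k₂)) = {ℓ - k₁} := by
    intro k₁ hk₁
    rw [Finset.mem_Icc] at hk₁
    ext k₂
    simp only [Finset.mem_filter, Finset.mem_Icc, Finset.mem_singleton]
    constructor
    · rintro ⟨⟨ha, hb⟩, c, hc⟩
      rcases c with _ | _ | c
      · omega
      · omega
      · have h2 : ℓ * 2 ≤ ℓ * (c + 1 + 1) := Nat.mul_le_mul_left _ (by omega)
        omega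
    · intro hk
      subst hk
      refine ⟨⟨by omega, by omega⟩, ?_⟩
      have h : k₁ + (ℓ - k₁) = ℓ := by omega
      rw [h]
  have step2 : ∀ k₁ ∈ Finset.Icc 1 (ℓ - 1),
      (∑ k₂ ∈ Finset.Icc 1 (ℓ - 1), ((if ℓ ∣ (k₁ + k₂) then (1 : ℂ) else 0) - 1))
      = 1 - ((ℓ - 1 : ℕ) : ℂ) := by
    intro k₁ hk₁
    rw [Finset.sum_sub_distrib, Finset.sum_boole, hfilter k₁ hk₁, Finset.sum_const,
      Finset.card_singleton, Nat.card_Icc]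
    simp
  rw [Finset.sum_congr rfl step1, Finset.sum_congr rfl step2, Finset.sum_const, Nat.card_Icc]
  have h1 : ℓ - 1 + 1 - 1 = ℓ - 1 := by omega
  rw [h1, nsmul_eq_mul]
  rw [Nat.cast_mul, Nat.cast_sub (by omega : 1 ≤ ℓ), Nat.cast_sub (by omega : 2 ≤ ℓ)]
  push_cast
  ring
end
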